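/- Every orthogonal product basis of a bipartite system H1 ⊗ H2 with dim H1 = 2 is reducible. That is, given an orthonormal basis {|a_s⟩⊗|b_s⟩ : s = 1,...,2d} of H1 ⊗ H2 by product vectors, there exists a partition of {1,...,2d} into nonempty sets J and K such that ⟨a_j|a_k⟩ = 0 for all j ∈ J and k ∈ K, or there exists such a partition with ⟨b_j|b_k⟩ = 0 for all j ∈ J, k ∈ K. -/

import Mathlib

/-!
Call two indices adjacent when their second factors are not orthogonal. If this graph is
disconnected, a connected component splits the second factors. Otherwise, orthogonality of the
basis forces the first factors of adjacent indices to be orthogonal, and in `ℂ²` orthogonality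
swaps a line `K` with the line `Kᗮ`; so, walking from a fixed index, every first factor lies in
`K = ℂ ∙ a s₀` or in `Kᗮ`, which splits the first factors. They cannot all lie in `K`: then
`w ⊗ b s₀` with `0 ≠ w ∈ Kᗮ` would be orthogonal to the whole basis.
-/

/-- Concrete tensor product of two vectors in Euclidean spaces. -/
noncomputable def tensor2 {ι κ : Type*} [Fintype ι] [Fintype κ]
    (a : EuclideanSpace ℂ ι) (b : EuclideanSpace ℂ κ) :
    EuclideanSpace ℂ (ι × κ) :=
  WithLp.toLp 2 (fun p : ι × κ => a p.1 * b p.2)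

open scoped InnerProductSpace
open Module Submodule

section OrthogonallySplits

variable (𝕜 : Type*) {E ι : Type*} [RCLike 𝕜] [NormedAddCommGroup E] [InnerProductSpace 𝕜 E]

def OrthogonallySplits (f : ι → E) : Prop :=
  ∃ J : Set ι, J.Nonempty ∧ Jᶜ.Nonempty ∧ ∀ j ∈ J, ∀ k ∈ Jᶜ, ⟪f j, f k⟫_𝕜 = 0

variable {𝕜}

theorem reflTransGen_of_not_orthogonallySplits {f : ι → E} (h : ¬OrthogonallySplits 𝕜 f)
    (s t : ι) : Relation.ReflTransGen (fun s t => ⟪f s, f t⟫_𝕜 ≠ 0) s t := by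
  by_contra ht
  exact h ⟨{u | Relation.ReflTransGen _ s u}, ⟨s, .refl⟩, ⟨t, ht⟩,
    fun j hj k hk => by_contra fun hjk => hk (hj.tail hjk)⟩

theorem orthogonallySplits_of_forall_mem_or_mem_orthogonal {f : ι → E} {K : Submodule 𝕜 E}
    (h : ∀ t, f t ∈ K ∨ f t ∈ Kᗮ) {s t : ι} (hs : f s ∈ K) (ht : f t ∉ K) :
    OrthogonallySplits 𝕜 f :=
  ⟨{u | f u ∈ K}, ⟨s, hs⟩, ⟨t, ht⟩,
    fun _ hj k hk => inner_right_of_mem_orthogonal hj ((h k).resolve_left hk)⟩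

end OrthogonallySplits

section Lines

variable {𝕜 E : Type*} [RCLike 𝕜] [NormedAddCommGroup E] [InnerProductSpace 𝕜 E]
  {K : Submodule 𝕜 E}

theorem mem_orthogonal_of_finrank_eq_one_of_inner_eq_zero (hK : finrank 𝕜 K = 1) {x y : E}
    (hx : x ∈ K) (hx0 : x ≠ 0) (h : ⟪x, y⟫_𝕜 = 0) : y ∈ Kᗮ := by
  rw [eq_span_singleton_of_mem_of_finrank_eq_one hK hx hx0]
  exact mem_orthogonal_singleton_iff_inner_right.mpr h

variable [FiniteDimensional 𝕜 E]

theorem finrank_orthogonal_eq_one (hE : finrank 𝕜 E = 2) (hK : finrank 𝕜 K = 1) :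
    finrank 𝕜 Kᗮ = 1 :=
  finrank_add_finrank_orthogonal' (by omega)

theorem mem_or_mem_orthogonal_of_inner_eq_zero (hE : finrank 𝕜 E = 2) (hK : finrank 𝕜 K = 1)
    {x y : E} (hx : x ∈ K ∨ x ∈ Kᗮ) (hx0 : x ≠ 0) (h : ⟪x, y⟫_𝕜 = 0) : y ∈ K ∨ y ∈ Kᗮ := by
  rcases hx with hx | hx
  · exact .inr (mem_orthogonal_of_finrank_eq_one_of_inner_eq_zero hK hx hx0 h)
  · left
    rw [← orthogonal_orthogonal K]
    exact mem_orthogonal_of_finrank_eq_one_of_inner_eq_zero (finrank_orthogonal_eq_one hE hK)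
      hx hx0 h

theorem mem_or_mem_orthogonal_of_reflTransGen {ι : Type*} {a : ι → E} {R : ι → ι → Prop}
    (hE : finrank 𝕜 E = 2) (hK : finrank 𝕜 K = 1) (ha : ∀ s, a s ≠ 0)
    (hR : ∀ s t, s ≠ t → R s t → ⟪a s, a t⟫_𝕜 = 0) {s t : ι} (hs : a s ∈ K ∨ a s ∈ Kᗮ)
    (hst : Relation.ReflTransGen R s t) : a t ∈ K ∨ a t ∈ Kᗮ := by
  induction hst with
  | refl => exact hs
  | @tail m u _ hmu ih =>
    rcases eq_or_ne m u with rfl | hne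
    · exact ih
    · exact mem_or_mem_orthogonal_of_inner_eq_zero hE hK ih (ha m) (hR m u hne hmu)

end Lines

section Tensor

variable {ι κ : Type*} [Fintype ι] [Fintype κ]

theorem inner_tensor2 (a c : EuclideanSpace ℂ ι) (b e : EuclideanSpace ℂ κ) :
    ⟪tensor2 a b, tensor2 c e⟫_ℂ = ⟪a, c⟫_ℂ * ⟪b, e⟫_ℂ := by
  simp only [tensor2, PiLp.inner_apply, RCLike.inner_apply', Finset.sum_mul_sum,
    ← Finset.univ_product_univ, Finset.sum_product]
  refine Finset.sum_congr rfl fun i _ => Finset.sum_congr rfl fun j _ => ?_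
  simp only [map_mul]
  ring

theorem tensor2_eq_zero_iff {a : EuclideanSpace ℂ ι} {b : EuclideanSpace ℂ κ} :
    tensor2 a b = 0 ↔ a = 0 ∨ b = 0 := by
  constructor
  · intro h
    have h2 := inner_tensor2 a a b b
    rwa [h, inner_zero_left, eq_comm, mul_eq_zero, inner_self_eq_zero, inner_self_eq_zero] at h2
  · rintro (rfl | rfl) <;> ext <;> simp [tensor2]

theorem tensor2_eq_zero_of_span_eq_top {σ : Type*} {a : σ → EuclideanSpace ℂ ι}
    {b : σ → EuclideanSpace ℂ κ}
    (hspan : span ℂ (Set.range fun s => tensor2 (a s) (b s)) = ⊤)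
    {w : EuclideanSpace ℂ ι} (hw : ∀ s, ⟪w, a s⟫_ℂ = 0) (e : EuclideanSpace ℂ κ) :
    tensor2 w e = 0 := by
  have hle : span ℂ (Set.range fun s => tensor2 (a s) (b s)) ≤ (ℂ ∙ tensor2 w e)ᗮ := by
    refine span_le.2 ?_
    rintro _ ⟨s, rfl⟩
    rw [SetLike.mem_coe, mem_orthogonal_singleton_iff_inner_left, inner_tensor2,
      inner_eq_zero_symm.1 (hw s), zero_mul]
  rw [hspan] at hle
  exact inner_self_eq_zero.1 (mem_orthogonal_singleton_iff_inner_left.1 (hle mem_top))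

end Tensor

/-- Every orthogonal product basis of a bipartite system `2 ⊗ d` is reducible: one can split
the index set into two nonempty parts `J` and `Jᶜ` so that the first factors (or the second
factors) over `J` are all orthogonal to those over `Jᶜ`. -/
theorem stmt2 (d : ℕ) (hd : 0 < d)
    (a : Fin (2 * d) → EuclideanSpace ℂ (Fin 2))
    (b : Fin (2 * d) → EuclideanSpace ℂ (Fin d))
    (ha : ∀ s, ‖a s‖ = 1) (hb : ∀ s, ‖b s‖ = 1)
    (honb : Orthonormal ℂ (fun s => tensor2 (a s) (b s)))
    (hspan : Submodule.span ℂ (Set.range fun s => tensor2 (a s) (b s)) = ⊤) :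
    (∃ J : Set (Fin (2 * d)), J.Nonempty ∧ Jᶜ.Nonempty ∧
        ∀ j ∈ J, ∀ k ∈ Jᶜ, (inner ℂ (a j) (a k) : ℂ) = 0) ∨
    (∃ J : Set (Fin (2 * d)), J.Nonempty ∧ Jᶜ.Nonempty ∧
        ∀ j ∈ J, ∀ k ∈ Jᶜ, (inner ℂ (b j) (b k) : ℂ) = 0) := by
  by_cases hbs : OrthogonallySplits ℂ b
  · exact .inr hbs
  left
  have ha0 (s) : a s ≠ 0 := ne_zero_of_norm_ne_zero (by simp [ha s])
  have hR (s t) (hst : s ≠ t) (hbst : ⟪b s, b t⟫_ℂ ≠ 0) : ⟪a s, a t⟫_ℂ = 0 := by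
    have h : ⟪tensor2 (a s) (b s), tensor2 (a t) (b t)⟫_ℂ = 0 := honb.2 hst
    rw [inner_tensor2] at h
    exact (mul_eq_zero.1 h).resolve_right hbst
  let s₀ : Fin (2 * d) := ⟨0, by omega⟩
  set K := ℂ ∙ a s₀
  have hK : finrank ℂ K = 1 := finrank_span_singleton (ha0 s₀)
  have hE : finrank ℂ (EuclideanSpace ℂ (Fin 2)) = 2 := finrank_euclideanSpace_fin
  have hs₀ : a s₀ ∈ K := mem_span_singleton_self _
  have hmem (t) : a t ∈ K ∨ a t ∈ Kᗮ := mem_or_mem_orthogonal_of_reflTransGen hE hK ha0 hR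
    (.inl hs₀) (reflTransGen_of_not_orthogonallySplits hbs s₀ t)
  by_cases hall : ∀ t, a t ∈ K
  · obtain ⟨w, hwK, hw0⟩ := Kᗮ.exists_mem_ne_zero_of_ne_bot fun h => by
      have h1 := finrank_orthogonal_eq_one hE hK
      rw [h, finrank_bot] at h1
      exact zero_ne_one h1
    have hwb := tensor2_eq_zero_of_span_eq_top hspan
      (fun s => inner_left_of_mem_orthogonal (hall s) hwK) (b s₀)
    rcases tensor2_eq_zero_iff.1 hwb with h | h
    · exact absurd h hw0
    · simpa [h] using hb s₀
  · obtain ⟨t, ht⟩ := not_forall.1 hall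
    exact orthogonallySplits_of_forall_mem_or_mem_orthogonal hmem hs₀ ht
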